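/- (Proposition 1.) Let X ⊂ ℝ^{n_x} be a nonempty compact set, let x : [0,∞) → ℝ^{n_x} be differentiable with x'(t) = f(x(t)) and x(t) ∈ X for all t ≥ 0, and let ẑ : [0,∞) → ℝ^{n_z} be differentiable with ẑ'(t) = A ẑ(t) + B h(x(t)) for all t ≥ 0. Let T̂ : ℝ^{n_x} → ℝ^{n_z} be continuously differentiable with PDE residual R, set R̄ := sup_{x∈X} ‖R(x)‖ and e_z(t) := ẑ(t) − T̂(x(t)). Let Q ∈ ℝ^{n_z×n_z} and P ∈ ℝ^{n_z×n_z} be symmetric positive definite with P A + Aᵀ P = −Q. Then limsup_{t→∞} ‖e_z(t)‖ ≤ √(4·λ_max(P)/(λ_min(Q)·λ_min(P)))·‖Q^{−1/2}P‖·R̄. -/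

import Mathlib

open Filter Matrix

/-- Euclidean space `ℝ^n`. -/
abbrev E (n : ℕ) := EuclideanSpace ℝ (Fin n)

/-- Smallest eigenvalue of a (Hermitian) real matrix. -/
noncomputable def lamMin {n : ℕ} (M : Matrix (Fin n) (Fin n) ℝ) : ℝ :=
  if h : M.IsHermitian then ⨅ i, h.eigenvalues i else 0

/-- Largest eigenvalue of a (Hermitian) real matrix. -/
noncomputable def lamMax {n : ℕ} (M : Matrix (Fin n) (Fin n) ℝ) : ℝ :=
  if h : M.IsHermitian then ⨆ i, h.eigenvalues i else 0

open scoped Classical in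
/-- The positive semidefinite square root `M^{1/2}` of a positive semidefinite matrix. -/
noncomputable def matSqrt {n : ℕ} (M : Matrix (Fin n) (Fin n) ℝ) : Matrix (Fin n) (Fin n) ℝ :=
  if h : M.PosSemidef then
    h.1.eigenvectorUnitary.1 * diagonal ((RCLike.ofReal : ℝ → ℝ) ∘ (√·) ∘ h.1.eigenvalues) *
      (star h.1.eigenvectorUnitary : Matrix (Fin n) (Fin n) ℝ)
  else 0

/-- `M^{-1/2} := (M^{1/2})⁻¹`. -/
noncomputable def invSqrt {n : ℕ} (M : Matrix (Fin n) (Fin n) ℝ) : Matrix (Fin n) (Fin n) ℝ :=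
  (matSqrt M)⁻¹

/-- Operator norm of a matrix induced by the Euclidean norms. -/
noncomputable def opNorm {m n : ℕ} (M : Matrix (Fin m) (Fin n) ℝ) : ℝ :=
  ‖LinearMap.toContinuousLinearMap (Matrix.toEuclideanLin M)‖

/-- Matrix-vector multiplication as a map between Euclidean spaces. -/
def mv {m n : ℕ} (M : Matrix (Fin m) (Fin n) ℝ) (v : E n) : E m := WithLp.toLp 2 (M.mulVec v)

/-!
The error `e = ẑ - T̂ ∘ x` solves `e' = A e - R(x)`, a linear system driven by a residual that
is bounded by `R̄` along the trajectory. For `V = ⟪e, P e⟫` the Lyapunov equation gives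
`V' = -⟪e, Q e⟫ - 2 ⟪e, P R⟫`; writing `⟪e, P R⟫ = ⟪Q^{1/2} e, Q^{-1/2} P R⟫` and using AM–GM,
`V' ≤ -(λ_min(Q) / (2 λ_max(P))) V + 2 ‖Q^{-1/2} P‖² R̄²`. Grönwall's inequality then bounds
`limsup V` by `4 λ_max(P) ‖Q^{-1/2} P‖² R̄² / λ_min(Q)`, and `λ_min(P) ‖e‖² ≤ V`.
-/

open scoped RealInnerProductSpace Topology

section MatrixVector

variable {m n p : ℕ}

lemma continuous_mv (M : Matrix (Fin m) (Fin n) ℝ) : Continuous (mv M) :=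
  (LinearMap.toContinuousLinearMap (toEuclideanLin M)).continuous

lemma opNorm_nonneg (M : Matrix (Fin m) (Fin n) ℝ) : 0 ≤ opNorm M := norm_nonneg _

lemma norm_mv_le (M : Matrix (Fin m) (Fin n) ℝ) (v : E n) : ‖mv M v‖ ≤ opNorm M * ‖v‖ :=
  (LinearMap.toContinuousLinearMap (toEuclideanLin M)).le_opNorm v

lemma mv_mv (M : Matrix (Fin m) (Fin n) ℝ) (N : Matrix (Fin n) (Fin p) ℝ) (v : E p) :
    mv M (mv N v) = mv (M * N) v := by
  simp [mv, mulVec_mulVec]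

lemma mv_sub (M : Matrix (Fin m) (Fin n) ℝ) (u v : E n) : mv M (u - v) = mv M u - mv M v := by
  simp [mv, mulVec_sub]

lemma add_mv (M N : Matrix (Fin m) (Fin n) ℝ) (v : E n) : mv (M + N) v = mv M v + mv N v := by
  simp [mv, add_mulVec]

lemma neg_mv (M : Matrix (Fin m) (Fin n) ℝ) (v : E n) : mv (-M) v = -mv M v := by
  simp [mv, neg_mulVec]

lemma inner_mv_left (M : Matrix (Fin m) (Fin n) ℝ) (u : E n) (v : E m) :
    ⟪mv M u, v⟫ = ⟪u, mv Mᵀ v⟫ := by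
  rw [← conjTranspose_eq_transpose_of_trivial]
  exact (LinearMap.adjoint_inner_right (toEuclideanLin M) u v).symm.trans
    (by rw [← toEuclideanLin_conjTranspose_eq_adjoint]; rfl)

end MatrixVector

section Rayleigh

variable {n : ℕ} {M : Matrix (Fin n) (Fin n) ℝ}

lemma Matrix.IsHermitian.transpose_eq_self (hM : M.IsHermitian) : Mᵀ = M := by
  simpa only [conjTranspose_eq_transpose_of_trivial] using hM.eq

lemma Matrix.IsHermitian.repr_mv (hM : M.IsHermitian) (v : E n) (j : Fin n) :
    hM.eigenvectorBasis.repr (mv M v) j = hM.eigenvalues j * hM.eigenvectorBasis.repr v j := by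
  have hj : mv M (hM.eigenvectorBasis j) = hM.eigenvalues j • hM.eigenvectorBasis j := by
    ext i; exact congrFun (hM.mulVec_eigenvectorBasis j) i
  rw [OrthonormalBasis.repr_apply_apply, OrthonormalBasis.repr_apply_apply, real_inner_comm,
    inner_mv_left, hM.transpose_eq_self, real_inner_comm, hj, real_inner_smul_left]

lemma Matrix.IsHermitian.inner_mv_self (hM : M.IsHermitian) (v : E n) :
    ⟪v, mv M v⟫ = ∑ j, hM.eigenvalues j * ⟪hM.eigenvectorBasis j, v⟫ ^ 2 := by
  rw [← hM.eigenvectorBasis.repr.inner_map_map, PiLp.inner_apply]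
  refine Finset.sum_congr rfl fun j _ => ?_
  rw [hM.repr_mv, RCLike.inner_apply, conj_trivial, OrthonormalBasis.repr_apply_apply]
  ring

lemma Matrix.IsHermitian.lamMin_mul_norm_sq_le (hM : M.IsHermitian) (v : E n) :
    lamMin M * ‖v‖ ^ 2 ≤ ⟪v, mv M v⟫ := by
  rw [lamMin, dif_pos hM, hM.inner_mv_self, ← hM.eigenvectorBasis.sum_sq_inner_right,
    Finset.mul_sum]
  gcongr with j
  exact ciInf_le (Finite.bddBelow_range _) j

lemma Matrix.IsHermitian.inner_mv_self_le (hM : M.IsHermitian) (v : E n) :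
    ⟪v, mv M v⟫ ≤ lamMax M * ‖v‖ ^ 2 := by
  rw [lamMax, dif_pos hM, hM.inner_mv_self, ← hM.eigenvectorBasis.sum_sq_inner_right,
    Finset.mul_sum]
  gcongr with j
  exact le_ciSup (Finite.bddAbove_range _) j

lemma Matrix.PosDef.lamMin_pos [NeZero n] (hM : M.PosDef) : 0 < lamMin M := by
  obtain ⟨i, hi⟩ := exists_eq_ciInf_of_finite (f := hM.1.eigenvalues)
  rw [lamMin, dif_pos hM.1, ← hi]
  exact hM.eigenvalues_pos i

lemma Matrix.PosDef.lamMax_pos [NeZero n] (hM : M.PosDef) : 0 < lamMax M := by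
  obtain ⟨i, hi⟩ := exists_eq_ciSup_of_finite (f := hM.1.eigenvalues)
  rw [lamMax, dif_pos hM.1, ← hi]
  exact hM.eigenvalues_pos i

end Rayleigh

section SquareRoot

variable {n : ℕ} {M : Matrix (Fin n) (Fin n) ℝ}

lemma Matrix.PosSemidef.posSemidef_matSqrt (hM : M.PosSemidef) : (matSqrt M).PosSemidef := by
  rw [matSqrt, dif_pos hM]
  exact (posSemidef_diagonal_iff.2 fun i => by simp).mul_mul_conjTranspose_same _

lemma Matrix.PosSemidef.matSqrt_mul_self (hM : M.PosSemidef) : matSqrt M * matSqrt M = M := by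
  rw [matSqrt, dif_pos hM]
  conv_rhs => rw [hM.1.spectral_theorem, Unitary.conjStarAlgAut_apply]
  have hU : (star hM.1.eigenvectorUnitary : Matrix (Fin n) (Fin n) ℝ) *
      hM.1.eigenvectorUnitary.1 = 1 := Unitary.coe_star_mul_self _
  simp only [mul_assoc]
  rw [← mul_assoc (star _ : Matrix (Fin n) (Fin n) ℝ), hU, one_mul, ← mul_assoc (diagonal _),
    diagonal_mul_diagonal]
  congr 3
  funext i
  simp [Real.mul_self_sqrt (hM.eigenvalues_nonneg i)]

lemma Matrix.PosDef.matSqrt_mul_invSqrt (hM : M.PosDef) : matSqrt M * invSqrt M = 1 := by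
  refine mul_nonsing_inv _ (isUnit_iff_ne_zero.2 fun h0 => hM.det_pos.ne' ?_)
  rw [← hM.posSemidef.matSqrt_mul_self, det_mul, h0, mul_zero]

end SquareRoot

section Lyapunov

variable {n : ℕ} {A P Q : Matrix (Fin n) (Fin n) ℝ}

lemma inner_mv_add_inner_mv_eq (hP : Pᵀ = P) (hLyap : P * A + Aᵀ * P = -Q) (e r : E n) :
    ⟪e, mv P (mv A e - r)⟫ + ⟪mv A e - r, mv P e⟫ = -⟪e, mv Q e⟫ - 2 * ⟪e, mv P r⟫ := by
  have hPr : ⟪r, mv P e⟫ = ⟪e, mv P r⟫ := by rw [real_inner_comm, inner_mv_left, hP]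
  have hQ : ⟪e, mv (P * A) e⟫ + ⟪e, mv (Aᵀ * P) e⟫ = -⟪e, mv Q e⟫ := by
    rw [← inner_add_right, ← add_mv, hLyap, neg_mv, inner_neg_right]
  rw [mv_sub, inner_sub_right, inner_sub_left, mv_mv, inner_mv_left A e, mv_mv, hPr]
  linarith

lemma neg_two_inner_mv_le (hQ : Q.PosDef) (P : Matrix (Fin n) (Fin n) ℝ) (e r : E n) :
    -(2 * ⟪e, mv P r⟫) ≤ ⟪e, mv Q e⟫ / 2 + 2 * (opNorm (invSqrt Q * P) * ‖r‖) ^ 2 := by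
  set S := matSqrt Q
  have hS : Sᵀ = S := hQ.posSemidef.posSemidef_matSqrt.1.transpose_eq_self
  have hPr : ⟪e, mv P r⟫ = ⟪mv S e, mv (invSqrt Q * P) r⟫ := by
    rw [inner_mv_left, hS, mv_mv, ← mul_assoc, hQ.matSqrt_mul_invSqrt, one_mul]
  have hQe : ⟪e, mv Q e⟫ = ‖mv S e‖ ^ 2 := by
    rw [← real_inner_self_eq_norm_sq, inner_mv_left, hS, mv_mv, hQ.posSemidef.matSqrt_mul_self]
  have hw := norm_mv_le (invSqrt Q * P) r
  rw [hPr, hQe]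
  calc -(2 * ⟪mv S e, mv (invSqrt Q * P) r⟫)
      ≤ 2 * (‖mv S e‖ * ‖mv (invSqrt Q * P) r‖) := by
        linarith [neg_le_of_abs_le (abs_real_inner_le_norm (mv S e) (mv (invSqrt Q * P) r))]
    _ ≤ ‖mv S e‖ ^ 2 / 2 + 2 * ‖mv (invSqrt Q * P) r‖ ^ 2 := by
        nlinarith [sq_nonneg (‖mv S e‖ - 2 * ‖mv (invSqrt Q * P) r‖)]
    _ ≤ ‖mv S e‖ ^ 2 / 2 + 2 * (opNorm (invSqrt Q * P) * ‖r‖) ^ 2 := by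
        gcongr

lemma inner_mv_add_inner_mv_le [NeZero n] (hQ : Q.PosDef) (hP : P.PosDef)
    (hLyap : P * A + Aᵀ * P = -Q) (e r : E n) :
    ⟪e, mv P (mv A e - r)⟫ + ⟪mv A e - r, mv P e⟫ ≤
      -(lamMin Q / (2 * lamMax P)) * ⟪e, mv P e⟫ + 2 * (opNorm (invSqrt Q * P) * ‖r‖) ^ 2 := by
  have hQP : lamMin Q / (2 * lamMax P) * ⟪e, mv P e⟫ ≤ ⟪e, mv Q e⟫ / 2 := by
    have := hP.lamMax_pos
    calc lamMin Q / (2 * lamMax P) * ⟪e, mv P e⟫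
        ≤ lamMin Q / (2 * lamMax P) * (lamMax P * ‖e‖ ^ 2) := by
          have := hQ.lamMin_pos
          gcongr
          exact hP.1.inner_mv_self_le e
      _ = lamMin Q * ‖e‖ ^ 2 / 2 := by field_simp
      _ ≤ ⟪e, mv Q e⟫ / 2 := by gcongr; exact hQ.1.lamMin_mul_norm_sq_le e
  rw [inner_mv_add_inner_mv_eq hP.1.transpose_eq_self hLyap]
  linarith [neg_two_inner_mv_le hQ P e r]

end Lyapunov

lemma le_gronwallBound_of_hasDerivAt {f f' : ℝ → ℝ} {K ε : ℝ}
    (hf : ∀ t ≥ 0, HasDerivAt f (f' t) t) (bound : ∀ t ≥ 0, f' t ≤ K * f t + ε) (t : ℝ)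
    (ht : 0 ≤ t) : f t ≤ gronwallBound (f 0) K ε t := by
  simpa using le_gronwallBound_of_liminf_deriv_right_le (b := t)
    (fun s hs => (hf s hs.1).continuousAt.continuousWithinAt)
    (fun s hs r hr => by
      simpa [slope_def_field, div_eq_inv_mul] using
        (hf s hs.1).hasDerivWithinAt.liminf_right_slope_le hr)
    le_rfl (fun s hs => bound s hs.1) t ⟨ht, le_rfl⟩

lemma tendsto_gronwallBound_atTop {δ K ε : ℝ} (hK : K < 0) :
    Tendsto (gronwallBound δ K ε) atTop (𝓝 (-ε / K)) := by
  have hexp : Tendsto (fun t => Real.exp (K * t)) atTop (𝓝 0) :=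
    Real.tendsto_exp_atBot.comp (tendsto_id.const_mul_atTop_of_neg hK)
  rw [gronwallBound_of_K_ne_0 hK.ne]
  convert (hexp.const_mul δ).add ((hexp.sub_const 1).const_mul (ε / K)) using 2
  field_simp
  ring

lemma limsup_le_of_eventually_le_of_tendsto {α : Type*} {l : Filter α} [l.NeBot] {f g : α → ℝ}
    {a : ℝ} (hf : ∀ x, 0 ≤ f x) (hfg : f ≤ᶠ[l] g) (hg : Tendsto g l (𝓝 a)) : limsup f l ≤ a :=
  hg.limsup_eq ▸ limsup_le_limsup hfg (isCoboundedUnder_le_of_le l hf) hg.isBoundedUnder_le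

theorem limsup_norm_le_of_lyapunov {n : ℕ} {A P Q : Matrix (Fin n) (Fin n) ℝ} (hQ : Q.PosDef)
    (hP : P.PosDef) (hLyap : P * A + Aᵀ * P = -Q) {e r : ℝ → E n} {ρ : ℝ}
    (he : ∀ t ≥ 0, HasDerivAt e (mv A (e t) - r t) t) (hr : ∀ t ≥ 0, ‖r t‖ ≤ ρ) :
    limsup (fun t => ‖e t‖) atTop ≤
      √(4 * lamMax P / (lamMin Q * lamMin P)) * opNorm (invSqrt Q * P) * ρ := by
  have hρ : 0 ≤ ρ := (norm_nonneg _).trans (hr 0 le_rfl)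
  rcases n.eq_zero_or_pos with rfl | hn
  · have he0 : (fun t => ‖e t‖) = fun _ => 0 :=
      funext fun t => by rw [Subsingleton.elim (e t) 0, norm_zero]
    rw [he0, limsup_const]
    exact mul_nonneg (mul_nonneg (Real.sqrt_nonneg _) (opNorm_nonneg _)) hρ
  have : NeZero n := ⟨hn.ne'⟩
  have hQmin := hQ.lamMin_pos
  have hPmin := hP.lamMin_pos
  have hPmax := hP.lamMax_pos
  have hk : 0 < lamMin Q / (2 * lamMax P) := by positivity
  have hN := opNorm_nonneg (invSqrt Q * P)
  set N := opNorm (invSqrt Q * P)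
  set k := lamMin Q / (2 * lamMax P)
  set c := 2 * (N * ρ) ^ 2
  set V := fun t => ⟪e t, mv P (e t)⟫
  have hV : ∀ t ≥ 0, HasDerivAt V
      (⟪e t, mv P (mv A (e t) - r t)⟫ + ⟪mv A (e t) - r t, mv P (e t)⟫) t := fun t ht =>
    (he t ht).inner ℝ ((LinearMap.toContinuousLinearMap (toEuclideanLin P)).hasFDerivAt
      |>.comp_hasDerivAt t (he t ht))
  have hVle : ∀ t ≥ 0, V t ≤ gronwallBound (V 0) (-k) c t := by
    refine le_gronwallBound_of_hasDerivAt hV fun t ht => ?_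
    calc _ ≤ -k * V t + 2 * (N * ‖r t‖) ^ 2 := inner_mv_add_inner_mv_le hQ hP hLyap (e t) (r t)
      _ ≤ -k * V t + 2 * (N * ρ) ^ 2 := by
        have := hr t ht
        gcongr
  have hbound : ∀ t ≥ 0, ‖e t‖ ≤ √(gronwallBound (V 0) (-k) c t / lamMin P) := fun t ht =>
    Real.le_sqrt_of_sq_le <| (le_div_iff₀ hPmin).2 <| by
      linarith [hP.1.lamMin_mul_norm_sq_le (e t), hVle t ht]
  have hlim : Tendsto (fun t => √(gronwallBound (V 0) (-k) c t / lamMin P)) atTop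
      (𝓝 √(-c / -k / lamMin P)) :=
    ((tendsto_gronwallBound_atTop (neg_lt_zero.2 hk)).div_const _).sqrt
  refine (limsup_le_of_eventually_le_of_tendsto (fun t => norm_nonneg _)
    (eventually_atTop.2 ⟨0, hbound⟩) hlim).trans_eq ?_
  have hconst : -c / -k / lamMin P = 4 * lamMax P / (lamMin Q * lamMin P) * (N * ρ) ^ 2 := by
    simp only [c, k]
    field_simp
    ring
  rw [hconst, Real.sqrt_mul (by positivity), Real.sqrt_sq (by positivity), mul_assoc]

theorem stmt5_general {nx ny nz : ℕ}
    (f : E nx → E nx) (hf : Continuous f)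
    (h : E nx → E ny) (hh : Continuous h)
    (A : Matrix (Fin nz) (Fin nz) ℝ) (B : Matrix (Fin nz) (Fin ny) ℝ)
    (X : Set (E nx)) (hXc : IsCompact X)
    (x : ℝ → E nx) (hx : ∀ t ≥ (0:ℝ), HasDerivAt x (f (x t)) t)
    (hxX : ∀ t ≥ (0:ℝ), x t ∈ X)
    (zh : ℝ → E nz)
    (hz : ∀ t ≥ (0:ℝ), HasDerivAt zh (mv A (zh t) + mv B (h (x t))) t)
    (T : E nx → E nz) (hT : ContDiff ℝ 1 T)
    (R : E nx → E nz)
    (hR : ∀ p, R p = fderiv ℝ T p (f p) - mv A (T p) - mv B (h p))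
    (Rbar : ℝ) (hRbar : Rbar = sSup ((fun p => ‖R p‖) '' X))
    (Q P : Matrix (Fin nz) (Fin nz) ℝ) (hQ : Q.PosDef) (hP : P.PosDef)
    (hLyap : P * A + Aᵀ * P = -Q) :
    limsup (fun t => ‖zh t - T (x t)‖) atTop ≤
      Real.sqrt (4 * lamMax P / (lamMin Q * lamMin P)) * opNorm (invSqrt Q * P) * Rbar := by
  have hRc : Continuous R := by
    rw [funext hR]
    exact (((hT.continuous_fderiv one_ne_zero).clm_apply hf).sub
      ((continuous_mv A).comp hT.continuous)).sub ((continuous_mv B).comp hh)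
  have hRle : ∀ t ≥ (0:ℝ), ‖R (x t)‖ ≤ Rbar := fun t ht =>
    hRbar ▸ le_csSup (hXc.image hRc.norm).bddAbove ⟨x t, hxX t ht, rfl⟩
  refine limsup_norm_le_of_lyapunov hQ hP hLyap (fun t ht => ?_) hRle
  have hTx : HasDerivAt (fun s => T (x s)) (fderiv ℝ T (x t) (f (x t))) t :=
    (hT.differentiable one_ne_zero (x t)).hasFDerivAt.comp_hasDerivAt t (hx t ht)
  refine ((hz t ht).sub hTx).congr_deriv ?_
  rw [hR, mv_sub]
  abel

theorem stmt5 {nx ny nz : ℕ}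
    (f : E nx → E nx) (hf : Continuous f)
    (h : E nx → E ny) (hh : Continuous h)
    (A : Matrix (Fin nz) (Fin nz) ℝ) (B : Matrix (Fin nz) (Fin ny) ℝ)
    (X : Set (E nx)) (hXne : X.Nonempty) (hXc : IsCompact X)
    (x : ℝ → E nx) (hx : ∀ t ≥ (0:ℝ), HasDerivAt x (f (x t)) t)
    (hxX : ∀ t ≥ (0:ℝ), x t ∈ X)
    (zh : ℝ → E nz)
    (hz : ∀ t ≥ (0:ℝ), HasDerivAt zh (mv A (zh t) + mv B (h (x t))) t)
    (T : E nx → E nz) (hT : ContDiff ℝ 1 T)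
    (R : E nx → E nz)
    (hR : ∀ p, R p = fderiv ℝ T p (f p) - mv A (T p) - mv B (h p))
    (Rbar : ℝ) (hRbar : Rbar = sSup ((fun p => ‖R p‖) '' X))
    (Q P : Matrix (Fin nz) (Fin nz) ℝ) (hQ : Q.PosDef) (hP : P.PosDef)
    (hLyap : P * A + Aᵀ * P = -Q) :
    limsup (fun t => ‖zh t - T (x t)‖) atTop ≤
      Real.sqrt (4 * lamMax P / (lamMin Q * lamMin P)) * opNorm (invSqrt Q * P) * Rbar :=
  stmt5_general f hf h hh A B X hXc x hx hxX zh hz T hT R hR Rbar hRbar Q P hQ hP hLyap
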